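/- arXiv:2407.09683 — 2 statements merged into one kernel-verified Lean document; each statement's English description precedes it below -/
import Mathlib

section
/- Let G be a graph and K a clique of G. Let G' be obtained from G by adding a new path P on at most ℓ new vertices, where each new vertex may additionally be joined to vertices of K. Then td(G') ≤ td(G) + ⌈log₂(ℓ+1)⌉, where td denotes tree-depth. -/
/-- `b` is an ancestor of `a` in the forest given by parent function `p`. -/
def Ancestor {V : Type*} (p : V → Option V) : V → V → Prop :=
  Relation.ReflTransGen (fun a b => p a = some b)

/-- `G` has tree-depth at most `h`. -/
def TreedepthLE {V : Type*} (G : SimpleGraph V) (h : ℕ) : Prop :=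
  ∃ (p : V → Option V) (d : V → ℕ),
    (∀ v u, p v = some u → d v = d u + 1) ∧
    (∀ v, p v = none → d v = 0) ∧
    (∀ v, d v < h) ∧
    (∀ u v, G.Adj u v → Ancestor p u v ∨ Ancestor p v u)

private lemma chain_lift {α β : Type*} {q : α → Option α} {p : β → Option β}
    {S : Set α} (f : ∀ i ∈ S, β)
    (hstep : ∀ i (hi : i ∈ S), ∀ j, q i = some j → ∃ hj : j ∈ S, p (f i hi) = some (f j hj)) :
    ∀ j i, Relation.ReflTransGen (fun x y => q x = some y) i j →
      ∀ hi : i ∈ S, ∃ hj : j ∈ S,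
        Relation.ReflTransGen (fun x y => p x = some y) (f i hi) (f j hj) := by
  intro j i h
  induction h using Relation.ReflTransGen.head_induction_on with
  | refl => exact fun hi => ⟨hi, .refl⟩
  | head hac _ ih =>
    intro hi
    obtain ⟨hc, hs⟩ := hstep _ hi _ hac
    obtain ⟨hj, hch⟩ := ih hc
    exact ⟨hj, .head hs hch⟩

private lemma bst_exists : ∀ n a : ℕ, ∃ (q : ℕ → Option ℕ) (e : ℕ → ℕ),
    (∀ i, a ≤ i → i < a + n → ∀ j, q i = some j → (a ≤ j ∧ j < a + n) ∧ e i = e j + 1) ∧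
    (∀ i, a ≤ i → i < a + n → e i < Nat.clog 2 (n + 1)) ∧
    q (a + n / 2) = none ∧ e (a + n / 2) = 0 ∧
    (∀ i, a ≤ i → i < a + n → q i = none → i = a + n / 2) ∧
    (∀ i, a ≤ i → i < a + n → Relation.ReflTransGen (fun x y => q x = some y) i (a + n / 2)) ∧
    (∀ i, a ≤ i → i + 1 < a + n →
      Relation.ReflTransGen (fun x y => q x = some y) i (i + 1) ∨
      Relation.ReflTransGen (fun x y => q x = some y) (i + 1) i) := by
  intro n
  induction n using Nat.strong_induction_on with
  | _ n IH =>
  intro a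
  rcases Nat.eq_zero_or_pos n with rfl | hn
  · exact ⟨fun _ => none, fun _ => 0,
      by intro i h1 h2; exfalso; omega,
      by intro i h1 h2; exfalso; omega, rfl, rfl,
      by intro i h1 h2; exfalso; omega,
      by intro i h1 h2; exfalso; omega,
      by intro i h1 h2; exfalso; omega⟩
  obtain ⟨qL, eL, hL1, hL3, hLr, hLe, hL2, hL4, hL5⟩ := IH (n / 2) (by omega) a
  obtain ⟨qR, eR, hR1, hR3, hRr, hRe, hR2, hR4, hR5⟩ := IH (n - n / 2 - 1) (by omega) (a + n / 2 + 1)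
  set r := a + n / 2 with hrdef
  set q : ℕ → Option ℕ := fun i => if i = r then none
      else if a ≤ i ∧ i < r then some ((qL i).getD r)
      else if r < i ∧ i < a + n then some ((qR i).getD r) else none with hq
  set e : ℕ → ℕ := fun i => if i = r then 0
      else if a ≤ i ∧ i < r then eL i + 1
      else if r < i ∧ i < a + n then eR i + 1 else 0 with he
  have hqr : q r = none := by simp [hq]
  have hqvalL : ∀ i, a ≤ i → i < r → q i = some ((qL i).getD r) := by
    intro i h1 h2; simp only [hq]; rw [if_neg (by omega), if_pos ⟨h1, h2⟩]
  have hqvalR : ∀ i, r < i → i < a + n → q i = some ((qR i).getD r) := by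
    intro i h1 h2; simp only [hq]; rw [if_neg (by omega), if_neg (by omega), if_pos ⟨h1, h2⟩]
  have hevalL : ∀ i, a ≤ i → i < r → e i = eL i + 1 := by
    intro i h1 h2; simp only [he]; rw [if_neg (by omega), if_pos ⟨h1, h2⟩]
  have hevalR : ∀ i, r < i → i < a + n → e i = eR i + 1 := by
    intro i h1 h2; simp only [he]; rw [if_neg (by omega), if_neg (by omega), if_pos ⟨h1, h2⟩]
  have her : e r = 0 := by simp [he]
  -- lift chains from left subtree
  have hliftL : ∀ i, a ≤ i → i < r → ∀ j,
      Relation.ReflTransGen (fun x y => qL x = some y) i j →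
      Relation.ReflTransGen (fun x y => q x = some y) i j ∧ a ≤ j ∧ j < r := by
    intro i h1 h2 j hch
    have := chain_lift (S := Set.Ico a r) (p := q) (q := qL) (fun z _ => z)
      (fun z hz y hy => by
        obtain ⟨⟨hy1, hy2⟩, -⟩ := hL1 z hz.1 hz.2 y hy
        exact ⟨⟨hy1, hy2⟩, by rw [hqvalL z hz.1 hz.2, hy]; rfl⟩) j i hch ⟨h1, h2⟩
    exact ⟨this.2, this.1.1, this.1.2⟩
  have hliftR : ∀ i, r < i → i < a + n → ∀ j,
      Relation.ReflTransGen (fun x y => qR x = some y) i j →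
      Relation.ReflTransGen (fun x y => q x = some y) i j ∧ r < j ∧ j < a + n := by
    intro i h1 h2 j hch
    have := chain_lift (S := Set.Ioo r (a + n)) (p := q) (q := qR) (fun z _ => z)
      (fun z hz y hy => by
        obtain ⟨hz1, hz2⟩ := hz
        obtain ⟨⟨hy1, hy2⟩, -⟩ := hR1 z hz1 (by omega) y hy
        exact ⟨⟨by omega, by omega⟩, by rw [hqvalR z hz1 hz2, hy]; rfl⟩) j i hch ⟨h1, h2⟩
    exact ⟨this.2, this.1.1, this.1.2⟩
  have hreachL : ∀ i, a ≤ i → i < r →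
      Relation.ReflTransGen (fun x y => q x = some y) i r := by
    intro i h1 h2
    obtain ⟨hch, hj1, hj2⟩ := hliftL i h1 h2 _ (hL4 i h1 (by omega))
    refine hch.tail ?_
    rw [hqvalL _ hj1 hj2, hLr, Option.getD_none]
  have hreachR : ∀ i, r < i → i < a + n →
      Relation.ReflTransGen (fun x y => q x = some y) i r := by
    intro i h1 h2
    obtain ⟨hch, hj1, hj2⟩ := hliftR i h1 h2 _ (hR4 i (by omega) (by omega))
    refine hch.tail ?_
    rw [hqvalR _ hj1 hj2, hRr, Option.getD_none]
  have hclog : Nat.clog 2 (n + 1) = Nat.clog 2 (n / 2 + 1) + 1 := by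
    rw [Nat.clog_of_two_le (by norm_num) (by omega)]
    congr 2
    omega
  refine ⟨q, e, ?_, ?_, hqr, her, ?_, ?_, ?_⟩
  · -- parent/depth relation
    intro i h1 h2 j hqi
    rcases lt_trichotomy i r with hir | rfl | hir
    · rw [hqvalL i h1 hir] at hqi
      cases hql : qL i with
      | some j' =>
        rw [hql, Option.getD_some] at hqi
        obtain rfl : j' = j := by injection hqi
        obtain ⟨⟨hj1, hj2⟩, heq⟩ := hL1 i h1 (by omega) j' hql
        refine ⟨⟨hj1, by omega⟩, ?_⟩
        rw [hevalL i h1 hir, hevalL j' hj1 hj2, heq]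
      | none =>
        rw [hql, Option.getD_none] at hqi
        obtain rfl : r = j := by injection hqi
        have hiL : i = a + (n / 2) / 2 := hL2 i h1 (by omega) hql
        refine ⟨⟨by omega, by omega⟩, ?_⟩
        rw [hevalL i h1 hir, her, hiL, hLe]
    · rw [hqr] at hqi; exact absurd hqi (by simp)
    · rw [hqvalR i hir h2] at hqi
      cases hql : qR i with
      | some j' =>
        rw [hql, Option.getD_some] at hqi
        obtain rfl : j' = j := by injection hqi
        obtain ⟨⟨hj1, hj2⟩, heq⟩ := hR1 i (by omega) (by omega) j' hql
        refine ⟨⟨by omega, by omega⟩, ?_⟩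
        rw [hevalR i hir h2, hevalR j' (by omega) (by omega), heq]
      | none =>
        rw [hql, Option.getD_none] at hqi
        obtain rfl : r = j := by injection hqi
        have hiR : i = (a + n / 2 + 1) + (n - n / 2 - 1) / 2 := hR2 i (by omega) (by omega) hql
        refine ⟨⟨by omega, by omega⟩, ?_⟩
        rw [hevalR i hir h2, her, hiR, hRe]
  · -- depth bound
    intro i h1 h2
    rcases lt_trichotomy i r with hir | rfl | hir
    · rw [hevalL i h1 hir, hclog]
      have := hL3 i h1 (by omega)
      omega
    · rw [her]
      exact Nat.clog_pos (by norm_num) (by omega)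
    · rw [hevalR i hir h2, hclog]
      have h3 := hR3 i (by omega) (by omega)
      have h4 : Nat.clog 2 (n - n / 2 - 1 + 1) ≤ Nat.clog 2 (n / 2 + 1) :=
        Nat.clog_mono_right 2 (by omega)
      omega
  · -- none implies root
    intro i h1 h2 hqi
    rcases lt_trichotomy i r with hir | rfl | hir
    · rw [hqvalL i h1 hir] at hqi; exact absurd hqi (by simp)
    · rfl
    · rw [hqvalR i hir h2] at hqi; exact absurd hqi (by simp)
  · -- reach root
    intro i h1 h2
    rcases lt_trichotomy i r with hir | rfl | hir
    · exact hreachL i h1 hir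
    · exact .refl
    · exact hreachR i hir h2
  · -- consecutive
    intro i h1 h2
    rcases lt_trichotomy (i + 1) r with hir | hir | hir
    · rcases hL5 i h1 (by omega) with hc | hc
      · exact Or.inl (hliftL i h1 (by omega) _ hc).1
      · exact Or.inr (hliftL (i + 1) (by omega) hir _ hc).1
    · left; rw [show i + 1 = r from hir]; exact hreachL i h1 (by omega)
    · rcases eq_or_lt_of_le (show r + 1 ≤ i + 1 by omega) with hi' | hi'
      · right
        have hieq : i = r := by omega
        rw [hieq]
        exact hreachR (r + 1) (by omega) (by omega)
      · rcases hR5 i (by omega) (by omega) with hc | hc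
        · exact Or.inl (hliftR i (by omega) (by omega) _ hc).1
        · exact Or.inr (hliftR (i + 1) (by omega) h2 _ hc).1

/-- Attaching a path on at most `ℓ` new vertices, each possibly joined to a
clique `K` of `G`, increases the tree-depth by at most `⌈log₂ (ℓ+1)⌉`. -/
theorem treedepth_add_path_to_clique {V : Type*} (G : SimpleGraph V)
    (K : Set V) (hK : G.IsClique K) (ℓ m : ℕ) (hm : m ≤ ℓ)
    (G' : SimpleGraph (V ⊕ Fin m))
    (hold : ∀ u v : V, G'.Adj (Sum.inl u) (Sum.inl v) ↔ G.Adj u v)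
    (hpath : ∀ i j : Fin m, G'.Adj (Sum.inr i) (Sum.inr j) ↔
      (i.val + 1 = j.val ∨ j.val + 1 = i.val))
    (hjoin : ∀ (u : V) (i : Fin m), G'.Adj (Sum.inl u) (Sum.inr i) → u ∈ K) :
    ∀ h : ℕ, TreedepthLE G h → TreedepthLE G' (h + Nat.clog 2 (ℓ + 1)) := by
  classical
  rintro h ⟨p, d, hpd, hp0, hdh, hanc⟩
  -- basic facts about ancestors and depths
  have anc_le : ∀ x y, Ancestor p x y → d y ≤ d x := by
    intro x y hxy
    unfold Ancestor at hxy
    induction hxy using Relation.ReflTransGen.head_induction_on with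
    | refl => exact le_refl _
    | head hac _ ih => have := hpd _ _ hac; omega
  have anc_lt : ∀ x y, Ancestor p x y → x ≠ y → d y < d x := by
    intro x y hxy hne
    rcases Relation.ReflTransGen.cases_head hxy with rfl | ⟨z, hz, hzy⟩
    · exact absurd rfl hne
    · have h1 := anc_le _ _ hzy
      have := hpd _ _ hz
      omega
  -- choose a deepest vertex of K (if K is nonempty)
  obtain ⟨wo, hwo⟩ : ∃ wo : Option V,
      ∀ u ∈ K, ∃ w, wo = some w ∧ (u = w ∨ Ancestor p w u) := by
    by_cases hKn : K.Nonempty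
    · obtain ⟨u0, hu0⟩ := hKn
      have hSne : (d '' K).Nonempty := ⟨d u0, ⟨u0, hu0, rfl⟩⟩
      have hbdd : BddAbove (d '' K) := ⟨h, by rintro x ⟨v, hv, rfl⟩; exact (hdh v).le⟩
      obtain ⟨w, hwK, hwd⟩ := Nat.sSup_mem hSne hbdd
      refine ⟨some w, fun u hu => ⟨w, rfl, ?_⟩⟩
      by_cases huw : u = w
      · exact Or.inl huw
      · have hadj : G.Adj u w := hK hu hwK huw
        rcases hanc u w hadj with hau | haw
        · have hle : d u ≤ d w := hwd ▸ le_csSup hbdd ⟨u, hu, rfl⟩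
          have := anc_lt _ _ hau huw
          omega
        · exact Or.inr haw
    · exact ⟨none, fun u hu => absurd ⟨u, hu⟩ hKn⟩
  obtain ⟨q, e, h1, h3, hqr, her, h2, h4, h5⟩ := bst_exists m 0
  set B : ℕ := wo.elim 0 (fun w => d w + 1) with hB
  have hBh : B ≤ h := by
    cases hwoc : wo with
    | none => simp [hB, hwoc]
    | some w => simp only [hB, hwoc, Option.elim]; exact hdh w
  set p' : V ⊕ Fin m → Option (V ⊕ Fin m) := fun x =>
    match x with
    | Sum.inl v => (p v).map Sum.inl
    | Sum.inr i =>
      match q i.val with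
      | some j => if hj : j < m then some (Sum.inr ⟨j, hj⟩) else none
      | none => wo.map Sum.inl
    with hp'
  set d' : V ⊕ Fin m → ℕ := fun x =>
    match x with
    | Sum.inl v => d v
    | Sum.inr i => B + e i.val
    with hd'
  have hp'inl : ∀ v, p' (Sum.inl v) = (p v).map Sum.inl := fun v => rfl
  have hp'some : ∀ (i : Fin m) j (hj : j < m), q i.val = some j →
      p' (Sum.inr i) = some (Sum.inr ⟨j, hj⟩) := by
    intro i j hj hqi
    simp only [hp', hqi, dif_pos hj]
  have hp'none : ∀ (i : Fin m), q i.val = none → p' (Sum.inr i) = wo.map Sum.inl := by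
    intro i hqi
    simp only [hp', hqi]
  -- lifting chains
  have liftV : ∀ x y, Ancestor p x y → Ancestor p' (Sum.inl x) (Sum.inl y) := by
    intro x y hxy
    exact Relation.ReflTransGen.lift (r := fun a b => p a = some b)
      (p := fun a b => p' a = some b) Sum.inl
      (fun a b hab => by show p' (Sum.inl a) = some (Sum.inl b); rw [hp'inl, hab]; rfl) _ _ hxy
  have liftF : ∀ x (hx : x < m) y, Relation.ReflTransGen (fun a b => q a = some b) x y →
      ∃ hy : y < m, Ancestor p' (Sum.inr ⟨x, hx⟩) (Sum.inr ⟨y, hy⟩) := by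
    intro x hx y hch
    exact chain_lift (S := {z | z < m}) (fun z hz => (Sum.inr ⟨z, hz⟩ : V ⊕ Fin m))
      (fun z hz y' hy' => by
        have hzm : z < m := hz
        obtain ⟨⟨-, hy2⟩, -⟩ := h1 z (by omega) (by omega) y' hy'
        exact ⟨(by omega : y' < m), hp'some ⟨z, hzm⟩ y' (by omega) hy'⟩) y x hch hx
  -- chain from any new vertex up through w and to any clique vertex
  have hKchain : ∀ (i : Fin m), ∀ u ∈ K, Ancestor p' (Sum.inr i) (Sum.inl u) := by
    intro i u hu
    obtain ⟨w, hwe, hwu⟩ := hwo u hu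
    have hm1 : 0 < m := i.pos
    have hroot : (0 + m / 2) < m := by omega
    obtain ⟨hy, hch⟩ := liftF i.val i.isLt _ (h4 i.val (by omega) (by omega))
    have hstep : p' (Sum.inr ⟨0 + m / 2, hy⟩) = some (Sum.inl w) := by
      rw [hp'none _ hqr, hwe]; rfl
    have hchain2 : Ancestor p' (Sum.inl w) (Sum.inl u) := by
      rcases hwu with rfl | hwu
      · exact Relation.ReflTransGen.refl
      · exact liftV _ _ hwu
    have hi : Sum.inr i = (Sum.inr ⟨i.val, i.isLt⟩ : V ⊕ Fin m) := by simp
    rw [hi]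
    exact (hch.tail hstep).trans hchain2
  refine ⟨p', d', ?_, ?_, ?_, ?_⟩
  · -- parent increments depth
    rintro (v | i) u hpu
    · rw [hp'inl] at hpu
      cases hpv : p v with
      | none => rw [hpv] at hpu; exact absurd hpu (by simp)
      | some u' =>
        rw [hpv] at hpu
        obtain rfl : Sum.inl u' = u := by simpa using hpu
        simp only [hd']
        exact hpd v u' hpv
    · cases hqi : q i.val with
      | some j =>
        obtain ⟨⟨-, hj2⟩, heq⟩ := h1 i.val (by omega) (by omega) j hqi
        rw [hp'some i j (by omega) hqi] at hpu
        obtain rfl : Sum.inr (⟨j, by omega⟩ : Fin m) = u := by simpa using hpu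
        simp only [hd']
        omega
      | none =>
        rw [hp'none i hqi] at hpu
        cases hwoc : wo with
        | none => rw [hwoc] at hpu; exact absurd hpu (by simp)
        | some w =>
          rw [hwoc] at hpu
          obtain rfl : Sum.inl w = u := by simpa using hpu
          have hir : i.val = 0 + m / 2 := h2 i.val (by omega) (by omega) hqi
          simp only [hd', hB, hwoc, Option.elim]
          rw [hir, her]
  · -- roots have depth 0
    rintro (v | i) hpu
    · rw [hp'inl] at hpu
      cases hpv : p v with
      | none => simp only [hd']; exact hp0 v hpv
      | some u' => rw [hpv] at hpu; exact absurd hpu (by simp)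
    · cases hqi : q i.val with
      | some j =>
        obtain ⟨⟨-, hj2⟩, -⟩ := h1 i.val (by omega) (by omega) j hqi
        rw [hp'some i j (by omega) hqi] at hpu
        exact absurd hpu (by simp)
      | none =>
        rw [hp'none i hqi] at hpu
        cases hwoc : wo with
        | some w => rw [hwoc] at hpu; exact absurd hpu (by simp)
        | none =>
          have hir : i.val = 0 + m / 2 := h2 i.val (by omega) (by omega) hqi
          simp only [hd', hB, hwoc, Option.elim]
          rw [hir, her]
  · -- depth bound
    rintro (v | i)
    · simp only [hd']
      have := hdh v
      omega
    · simp only [hd']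
      have he1 : e i.val < Nat.clog 2 (m + 1) := h3 i.val (by omega) (by omega)
      have he2 : Nat.clog 2 (m + 1) ≤ Nat.clog 2 (ℓ + 1) := Nat.clog_mono_right 2 (by omega)
      omega
  · -- adjacency
    rintro (u | i) (v | j) hadj
    · rcases hanc u v ((hold u v).mp hadj) with hc | hc
      · exact Or.inl (liftV _ _ hc)
      · exact Or.inr (liftV _ _ hc)
    · exact Or.inr (hKchain j u (hjoin u j hadj))
    · exact Or.inl (hKchain i v (hjoin v i hadj.symm))
    · rcases (hpath i j).mp hadj with hij | hij
      · have hch := h5 i.val (by omega) (by omega)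
        rcases hch with hc | hc
        · obtain ⟨hy, hch'⟩ := liftF i.val i.isLt _ hc
          left
          have h1' : (Sum.inr ⟨i.val, i.isLt⟩ : V ⊕ Fin m) = Sum.inr i := by simp
          have h2' : (Sum.inr ⟨i.val + 1, hy⟩ : V ⊕ Fin m) = Sum.inr j := by
            congr 1; exact Fin.ext hij
          rwa [h1', h2'] at hch'
        · obtain ⟨hy, hch'⟩ := liftF (i.val + 1) (by omega) _ hc
          right
          have h1' : (Sum.inr ⟨i.val + 1, by omega⟩ : V ⊕ Fin m) = Sum.inr j := by
            congr 1; exact Fin.ext hij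
          have h2' : (Sum.inr ⟨i.val, hy⟩ : V ⊕ Fin m) = Sum.inr i := by simp
          rwa [h1', h2'] at hch'
      · have hch := h5 j.val (by omega) (by omega)
        rcases hch with hc | hc
        · obtain ⟨hy, hch'⟩ := liftF j.val j.isLt _ hc
          right
          have h1' : (Sum.inr ⟨j.val, j.isLt⟩ : V ⊕ Fin m) = Sum.inr j := by simp
          have h2' : (Sum.inr ⟨j.val + 1, hy⟩ : V ⊕ Fin m) = Sum.inr i := by
            congr 1; exact Fin.ext hij
          rwa [h1', h2'] at hch'
        · obtain ⟨hy, hch'⟩ := liftF (j.val + 1) (by omega) _ hc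
          left
          have h1' : (Sum.inr ⟨j.val + 1, by omega⟩ : V ⊕ Fin m) = Sum.inr i := by
            congr 1; exact Fin.ext hij
          have h2' : (Sum.inr ⟨j.val, hy⟩ : V ⊕ Fin m) = Sum.inr j := by simp
          rwa [h1', h2'] at hch'
end

section
/- Let G = (V,E) be a graph and construct the CNF φ with a variable x_v for each v ∈ V and, for each edge uv ∈ E, the clauses (x_u ∨ x_v) and (¬x_u ∨ ¬x_v). Then for every assignment σ, the number of clauses of φ satisfied by σ equals |E| plus the number of edges cut by the partition (σ⁻¹(true), σ⁻¹(false)); consequently the maximum number of simultaneously satisfiable clauses of φ equals |E| + maxcut(G). -/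
/-- A clause is a finite set of literals (variable, polarity). -/
abbrev Clause (V : Type*) [DecidableEq V] := Finset (V × Bool)

open Finset

section Aux

variable {V : Type*} [Fintype V] [DecidableEq V]

/-- The clause `{(a,b),(c,b)}` associated to an edge. -/
private def cl (b : Bool) : Sym2 V → Clause V :=
  Sym2.lift ⟨fun a c => ({(a, b), (c, b)} : Clause V), fun a c => by
    simp [Finset.pair_comm]⟩

private lemma cl_inj (b : Bool) : Function.Injective (cl (V := V) b) := by
  intro e₁ e₂ h
  induction e₁ using Sym2.ind with | _ a₁ b₁ =>
  induction e₂ using Sym2.ind with | _ a₂ b₂ =>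
  simp only [cl, Sym2.lift_mk] at h
  rw [Finset.ext_iff] at h
  have h1 := h (a₁, b); have h2 := h (b₁, b)
  have h3 := h (a₂, b); have h4 := h (b₂, b)
  simp [Prod.ext_iff] at h1 h2 h3 h4
  rw [Sym2.eq_iff]
  rcases h1 with h1 | h1 <;> rcases h2 with h2 | h2 <;>
    rcases h3 with h3 | h3 <;> rcases h4 with h4 | h4 <;> subst_vars <;> simp_all

private lemma cl_ne (e e' : Sym2 V) : cl true e ≠ cl false e' := by
  induction e using Sym2.ind with | _ a₁ b₁ =>
  induction e' using Sym2.ind with | _ a₂ b₂ =>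
  intro h
  simp only [cl, Sym2.lift_mk] at h
  have : (a₁, true) ∈ ({(a₂, false), (b₂, false)} : Clause V) := by
    rw [← h]; simp
  simp [Prod.ext_iff] at this

private lemma image_eq (G : SimpleGraph V) [DecidableRel G.Adj] (b : Bool) :
    ((univ.filter fun p : V × V => G.Adj p.1 p.2).image
        fun p => ({(p.1, b), (p.2, b)} : Clause V)) =
      G.edgeFinset.image (cl b) := by
  ext C
  simp only [mem_image, mem_filter, mem_univ, true_and,
    SimpleGraph.mem_edgeFinset]
  constructor
  · rintro ⟨p, hp, rfl⟩
    exact ⟨s(p.1, p.2), G.mem_edgeSet.mpr hp, rfl⟩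
  · rintro ⟨e, he, rfl⟩
    revert he
    induction e using Sym2.ind with | _ x y =>
    intro he
    exact ⟨(x, y), G.mem_edgeSet.mp he, rfl⟩

private lemma cut_eq (G : SimpleGraph V) [DecidableRel G.Adj] (σ : V → Bool) :
    (univ.filter fun p : V × V =>
        G.Adj p.1 p.2 ∧ σ p.1 = true ∧ σ p.2 = false).card =
    (G.edgeFinset.filter fun e =>
        ∃ a ∈ e, ∃ c ∈ e, σ a = true ∧ σ c = false).card := by
  refine Finset.card_bij (fun p _ => s(p.1, p.2)) ?_ ?_ ?_
  · rintro p hp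
    simp only [mem_filter, mem_univ, true_and] at hp
    obtain ⟨hadj, h1, h2⟩ := hp
    simp only [mem_filter, SimpleGraph.mem_edgeFinset]
    exact ⟨G.mem_edgeSet.mpr hadj, p.1, Sym2.mem_mk_left p.1 p.2,
      p.2, Sym2.mem_mk_right p.1 p.2, h1, h2⟩
  · rintro p₁ hp₁ p₂ hp₂ h
    simp only [mem_filter, mem_univ, true_and] at hp₁ hp₂
    rw [Sym2.eq_iff] at h
    rcases h with ⟨h1, h2⟩ | ⟨h1, h2⟩
    · exact Prod.ext h1 h2
    · exfalso
      have := hp₁.2.1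
      rw [h1, hp₂.2.2] at this
      exact Bool.false_ne_true this
  · rintro e he
    simp only [mem_filter, SimpleGraph.mem_edgeFinset] at he
    obtain ⟨he, ha⟩ := he
    revert he ha
    induction e using Sym2.ind with | _ x y =>
    intro he ha
    obtain ⟨a, haa, c, hcc, h1, h2⟩ := ha
    rw [Sym2.mem_iff] at haa hcc
    have hadj := G.mem_edgeSet.mp he
    rcases haa with rfl | rfl <;> rcases hcc with rfl | rfl
    · exact absurd (h1.symm.trans h2) (by simp)
    · exact ⟨(a, c), by simp [hadj, h1, h2], rfl⟩
    · exact ⟨(a, c), by simp [hadj.symm, h1, h2], Sym2.eq_swap⟩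
    · exact absurd (h1.symm.trans h2) (by simp)

private lemma filter_card_sum (G : SimpleGraph V) [DecidableRel G.Adj]
    (σ : V → Bool) :
    (G.edgeFinset.filter fun e => ∃ l ∈ cl true e, σ l.1 = l.2).card
      + (G.edgeFinset.filter fun e => ∃ l ∈ cl false e, σ l.1 = l.2).card
    = G.edgeFinset.card
      + (G.edgeFinset.filter fun e =>
          ∃ a ∈ e, ∃ c ∈ e, σ a = true ∧ σ c = false).card := by
  rw [Finset.card_filter, Finset.card_filter, Finset.card_filter,
    Finset.card_eq_sum_ones, ← Finset.sum_add_distrib, ← Finset.sum_add_distrib]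
  refine Finset.sum_congr rfl fun e _ => ?_
  induction e using Sym2.ind with | _ x y =>
  simp only [cl, Sym2.lift_mk]
  cases hx : σ x <;> cases hy : σ y <;>
    simp [Sym2.mem_iff, Prod.ext_iff, exists_or, hx, hy]

end Aux

open Finset in
/-- The Max-Cut ↦ Max-SAT reduction: the CNF with clauses `(x_u ∨ x_v)` and
`(¬x_u ∨ ¬x_v)` for each edge `uv` of `G`.  For every assignment `σ`, the
number of satisfied clauses equals `|E|` plus the number of edges cut by the
bipartition induced by `σ`; consequently the maximum number of simultaneously
satisfiable clauses equals `|E| + maxcut(G)`. -/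
theorem maxcut_maxsat_reduction {V : Type*} [Fintype V] [DecidableEq V]
    (G : SimpleGraph V) [DecidableRel G.Adj]
    (φ : Finset (Clause V))
    (hφ : φ =
      ((univ.filter fun p : V × V => G.Adj p.1 p.2).image
          fun p => ({(p.1, true), (p.2, true)} : Clause V)) ∪
      ((univ.filter fun p : V × V => G.Adj p.1 p.2).image
          fun p => ({(p.1, false), (p.2, false)} : Clause V)))
    (satCount : (V → Bool) → ℕ)
    (hsat : ∀ σ, satCount σ = (φ.filter fun C => ∃ l ∈ C, σ l.1 = l.2).card)
    (cutCount : (V → Bool) → ℕ)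
    (hcut : ∀ σ, cutCount σ =
      (univ.filter fun p : V × V =>
        G.Adj p.1 p.2 ∧ σ p.1 = true ∧ σ p.2 = false).card) :
    (∀ σ, satCount σ = G.edgeFinset.card + cutCount σ) ∧
    (∀ mc : ℕ, IsGreatest {m | ∃ σ : V → Bool, cutCount σ = m} mc →
      IsGreatest {m | ∃ σ : V → Bool, satCount σ = m}
        (G.edgeFinset.card + mc)) := by
  have key : ∀ σ, satCount σ = G.edgeFinset.card + cutCount σ := by
    intro σ
    have hdisj : Disjoint (G.edgeFinset.image (cl true))
        (G.edgeFinset.image (cl false)) := by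
      rw [Finset.disjoint_left]
      rintro C hC hC'
      simp only [mem_image] at hC hC'
      obtain ⟨e, -, rfl⟩ := hC
      obtain ⟨e', -, he'⟩ := hC'
      exact cl_ne e e' he'.symm
    rw [hsat, hφ, image_eq, image_eq, Finset.filter_union,
      Finset.card_union_of_disjoint
        (Finset.disjoint_filter_filter hdisj),
      Finset.filter_image, Finset.filter_image,
      Finset.card_image_of_injective _ (cl_inj true),
      Finset.card_image_of_injective _ (cl_inj false),
      hcut, cut_eq]
    have h := filter_card_sum G σ
    convert h using 3 <;> simp [Finset.filter_congr_decidable]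
  refine ⟨key, ?_⟩
  intro mc hmc
  constructor
  · obtain ⟨σ, hσ⟩ := hmc.1
    exact ⟨σ, by rw [key, hσ]⟩
  · rintro m ⟨σ, rfl⟩
    rw [key]
    exact Nat.add_le_add_left (hmc.2 ⟨σ, rfl⟩) _
end
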